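/- arXiv:2002.11999 — 2 statements merged into one kernel-verified Lean document; each statement's English description precedes it below -/
import Mathlib

section
/- For every integer n ≥ 1 and every 1 ≤ k ≤ n, the first k(n−k+1) positive roots of the enumeration associated to the reduced word i^k are exactly the roots containing α_k: {β_1^{i^k}, β_2^{i^k}, …, β_{k(n−k+1)}^{i^k}} = {(i,j) ∈ Δ₊ : 1 ≤ i ≤ k ≤ j ≤ n}. -/
/-- The adjacent transposition `s_i` swapping `i` and `i+1` (as a permutation of `ℕ`,
with 1-based conventions: the relevant generators are `s_1, …, s_n`). -/
def sw (i : ℕ) : Equiv.Perm ℕ := Equiv.swap i (i + 1)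

/-- The product `s_{i_1} ⋯ s_{i_r}` of the adjacent transpositions along a word. -/
def wordProd (w : List ℕ) : Equiv.Perm ℕ := (w.map sw).prod

/-- The longest element `w_0` of `S_{n+1}`: the order-reversing permutation
`i ↦ n+2−i` of `{1,…,n+1}` (extended by the identity outside). -/
def w0 (n : ℕ) : Equiv.Perm ℕ :=
  Function.Involutive.toPerm (fun i => if 1 ≤ i ∧ i ≤ n + 1 then n + 2 - i else i)
    (by intro i; dsimp only; split_ifs <;> omega)

/-- The number of inversions of a permutation of `{1,…,n+1}`. -/
def inversions (n : ℕ) (w : Equiv.Perm ℕ) : ℕ :=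
  ((Finset.Icc 1 (n + 1) ×ˢ Finset.Icc 1 (n + 1)).filter
    (fun p => p.1 < p.2 ∧ w p.2 < w p.1)).card

/-- Part (A) of the word `i^k`: the word
`(k,k−1,…,1, k+1,k,…,2, …, n,n−1,…,n−k+1)` of the permutation `w_{k,n}`. -/
def wordA (n k : ℕ) : List ℕ :=
  ((List.range (n - k + 1)).map (fun m => (List.range k).map (fun t => k + m - t))).flatten

/-- Part (B) of the word `i^k`: the word
`(n,n−1,…,n−k+2, n,n−1,…,n−k+3, …, n,n−1, n)` of the permutation `S_{n−(k−1)+[k−1]}`. -/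
def wordB (n k : ℕ) : List ℕ :=
  ((List.range (k - 1)).map (fun b => (List.range (k - 1 - b)).map (fun t => n - t))).flatten

/-- Part (C) of the word `i^k`: the word
`(1,2,…,n−k, 1,2,…,n−k−1, …, 1,2, 1)` of the permutation `S_{[n−k]}`. -/
def wordC (n k : ℕ) : List ℕ :=
  ((List.range (n - k)).map (fun b => (List.range (n - k - b)).map (fun t => t + 1))).flatten

/-- The reduced word `i^k` for the longest element `w_0`. -/
def ik (n k : ℕ) : List ℕ := wordA n k ++ wordB n k ++ wordC n k

/-- The positive root `β_ℓ^i = s_{i_1}⋯s_{i_{ℓ−1}}(α_{i_ℓ})` (1-based `ℓ`) associated to a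
reduced word `w = (i_1,…,i_N)`, encoded as the pair
`(σ(i_ℓ), σ(i_ℓ+1) − 1)` where `σ = s_{i_1}⋯s_{i_{ℓ−1}}`. -/
def beta (w : List ℕ) (l : ℕ) : ℕ × ℕ :=
  (wordProd (w.take (l - 1)) (w.getD (l - 1) 0),
   wordProd (w.take (l - 1)) (w.getD (l - 1) 0 + 1) - 1)

/-- Explicit formula (depending on block `m` and position `t`) for the permutation given by
a prefix of `wordA n k`. -/
def fB (k m t x : ℕ) : ℕ :=
  if 1 ≤ x ∧ x ≤ m then x + k
  else if x ≤ k + m - t then x - m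
  else if x = k + m - t + 1 then k + m + 1
  else if x ≤ k + m + 1 then x - m - 1
  else x

/-- Explicit formula for the permutation given by the length-`L` prefix of `wordA n k`. -/
def fA (k L x : ℕ) : ℕ := fB k (L / k) (L % k) x

lemma wordProd_append (a b : List ℕ) : wordProd (a ++ b) = wordProd a * wordProd b := by
  simp [wordProd]

lemma flatten_range_map (k : ℕ) (g : ℕ → ℕ) (M : ℕ) :
    ((List.range M).map (fun m => (List.range k).map (fun t => g (m * k + t)))).flatten
      = (List.range (M * k)).map g := by
  induction M with
  | zero => simp
  | succ M ih =>
    rw [List.range_succ, List.map_append, List.flatten_append, ih, Nat.succ_mul,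
      List.range_add, List.map_append]
    simp [List.map_map, Function.comp]

lemma wordA_eq (n k : ℕ) (hk : 1 ≤ k) :
    wordA n k = (List.range ((n - k + 1) * k)).map (fun L => k + L / k - L % k) := by
  rw [wordA, ← flatten_range_map k (fun L => k + L / k - L % k) (n - k + 1)]
  congr 1
  apply List.map_congr_left
  intro m _
  apply List.map_congr_left
  intro t ht
  have htk : t < k := List.mem_range.mp ht
  have h1 : (m * k + t) / k = m := by
    rw [Nat.mul_comm, Nat.mul_add_div (by omega)]
    simp [Nat.div_eq_of_lt htk]
  have h2 : (m * k + t) % k = t := by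
    rw [Nat.mul_comm, Nat.mul_add_mod]
    exact Nat.mod_eq_of_lt htk
  rw [h1, h2]

lemma wordA_length (n k : ℕ) (hk : 1 ≤ k) :
    (wordA n k).length = (n - k + 1) * k := by
  rw [wordA_eq n k hk]; simp

lemma wordA_getD (n k L : ℕ) (hk : 1 ≤ k) (hL : L < (n - k + 1) * k) :
    (wordA n k).getD L 0 = k + L / k - L % k := by
  rw [wordA_eq n k hk, List.getD_eq_getElem _ _ (by simpa using hL)]
  simp

lemma fB_step (k m t x : ℕ) (hk : 1 ≤ k) (ht : t < k) :
    fB k m t (sw (k + m - t) x) = fB k m (t + 1) x := by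
  simp only [fB, sw, Equiv.swap_apply_def]
  split_ifs <;> omega

lemma fB_wrap (k m x : ℕ) (hk : 1 ≤ k) : fB k m k x = fB k (m + 1) 0 x := by
  simp only [fB]
  split_ifs <;> omega

lemma fA_step (k L x : ℕ) (hk : 1 ≤ k) :
    fA k L (sw (k + L / k - L % k) x) = fA k (L + 1) x := by
  have hL : L = k * (L / k) + L % k := (Nat.div_add_mod L k).symm
  have ht : L % k < k := Nat.mod_lt _ (by omega)
  rw [fA, fA]
  by_cases h : L % k + 1 < k
  · have hm' : (L + 1) / k = L / k := by
      conv_lhs => rw [hL]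
      have he : k * (L / k) + L % k + 1 = k * (L / k) + (L % k + 1) := by omega
      rw [he, Nat.mul_add_div (by omega), Nat.div_eq_of_lt h, Nat.add_zero]
    have ht' : (L + 1) % k = L % k + 1 := by
      conv_lhs => rw [hL]
      have he : k * (L / k) + L % k + 1 = k * (L / k) + (L % k + 1) := by omega
      rw [he, Nat.mul_add_mod]
      exact Nat.mod_eq_of_lt h
    rw [hm', ht']
    exact fB_step k (L / k) (L % k) x hk ht
  · have hk1 : L % k + 1 = k := by omega
    have hmul : k * (L / k + 1) = k * (L / k) + k := by ring
    have hL1 : L + 1 = k * (L / k + 1) := by omega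
    have hm' : (L + 1) / k = L / k + 1 := by
      rw [hL1, Nat.mul_div_cancel_left _ (by omega : 0 < k)]
    have ht' : (L + 1) % k = 0 := by
      rw [hL1, Nat.mul_mod_right]
    rw [hm', ht', fB_step k (L / k) (L % k) x hk ht, hk1, fB_wrap k (L / k) x hk]

lemma prefix_prod (n k : ℕ) (hk : 1 ≤ k) :
    ∀ L, L ≤ (n - k + 1) * k → ∀ x, wordProd ((wordA n k).take L) x = fA k L x := by
  intro L
  induction L with
  | zero =>
    intro _ x
    have h1 : wordProd ((wordA n k).take 0) x = x := by
      simp [wordProd]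
    rw [h1]
    simp only [fA, fB, Nat.zero_div, Nat.zero_mod]
    split_ifs <;> omega
  | succ L ih =>
    intro hL x
    have hL' : L < (wordA n k).length := by rw [wordA_length n k hk]; omega
    have hgd : (wordA n k)[L]? = some ((wordA n k).getD L 0) := by
      rw [List.getD_eq_getElem _ _ hL', List.getElem?_eq_getElem hL']
    rw [List.take_succ, hgd]
    have h0 : ((some ((wordA n k).getD L 0)).toList : List ℕ) = [(wordA n k).getD L 0] := rfl
    rw [h0, wordProd_append]
    have h1 : wordProd [(wordA n k).getD L 0] = sw ((wordA n k).getD L 0) := by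
      simp [wordProd]
    have h2 : (wordA n k).getD L 0 = k + L / k - L % k := wordA_getD n k L hk (by omega)
    rw [h1, h2]
    show wordProd ((wordA n k).take L) (sw (k + L / k - L % k) x) = fA k (L + 1) x
    rw [ih (by omega) (sw (k + L / k - L % k) x), fA_step k L x hk]

lemma beta_ik (n k l : ℕ) (hk : 1 ≤ k) (h1 : 1 ≤ l) (h2 : l ≤ k * (n - k + 1)) :
    beta (ik n k) l = (k - (l - 1) % k, k + (l - 1) / k) := by
  have hcomm : k * (n - k + 1) = (n - k + 1) * k := Nat.mul_comm _ _
  have hlen : (wordA n k).length = (n - k + 1) * k := wordA_length n k hk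
  have hL : l - 1 < (n - k + 1) * k := by omega
  have htake : (ik n k).take (l - 1) = (wordA n k).take (l - 1) := by
    rw [ik, List.append_assoc, List.take_append_of_le_length (by omega)]
  have hget : (ik n k).getD (l - 1) 0 = k + (l - 1) / k - (l - 1) % k := by
    rw [ik, List.append_assoc, List.getD_append _ _ _ _ (by omega)]
    exact wordA_getD n k (l - 1) hk hL
  have ht : (l - 1) % k < k := Nat.mod_lt _ (by omega)
  simp only [beta, htake, hget, prefix_prod n k hk (l - 1) (by omega)]
  simp only [fA]
  obtain ⟨m, t, hdm2, hdt2, htk⟩ : ∃ m t, (l - 1) / k = m ∧ (l - 1) % k = t ∧ t < k :=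
    ⟨_, _, rfl, rfl, ht⟩
  rw [hdm2, hdt2]
  simp only [fB, Prod.mk.injEq]
  refine ⟨?_, ?_⟩ <;> (split_ifs <;> omega)

/-- The first `k(n−k+1)` positive roots of the enumeration associated to `i^k` are exactly
the positive roots `α_{i,j}` with `1 ≤ i ≤ k ≤ j ≤ n`. -/
theorem ik_initial_roots (n k : ℕ) (hn : 1 ≤ n) (hk1 : 1 ≤ k) (hkn : k ≤ n) :
    {q : ℕ × ℕ | ∃ l, 1 ≤ l ∧ l ≤ k * (n - k + 1) ∧ q = beta (ik n k) l} =
    {q : ℕ × ℕ | 1 ≤ q.1 ∧ q.1 ≤ k ∧ k ≤ q.2 ∧ q.2 ≤ n} := by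
  ext ⟨i, j⟩
  simp only [Set.mem_setOf_eq]
  constructor
  · rintro ⟨l, h1, h2, heq⟩
    rw [beta_ik n k l hk1 h1 h2, Prod.mk.injEq] at heq
    obtain ⟨hi, hj⟩ := heq
    have ht : (l - 1) % k < k := Nat.mod_lt _ (by omega)
    have hm : (l - 1) / k < n - k + 1 := by
      by_contra hc
      push_neg at hc
      have ha : (n - k + 1) * k ≤ (l - 1) / k * k := Nat.mul_le_mul_right k hc
      have hdm : (l - 1) / k * k ≤ l - 1 := Nat.div_mul_le_self _ _
      have hb : k * (n - k + 1) = (n - k + 1) * k := Nat.mul_comm _ _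
      omega
    obtain ⟨m, t, hdm2, hdt2⟩ : ∃ m t, (l - 1) / k = m ∧ (l - 1) % k = t := ⟨_, _, rfl, rfl⟩
    rw [hdm2] at hj hm
    rw [hdt2] at hi ht
    omega
  · rintro ⟨hi1, hik, hkj, hjn⟩
    refine ⟨(j - k) * k + (k - i) + 1, by omega, ?_, ?_⟩
    · have h5 : (j - k) * k ≤ (n - k) * k := Nat.mul_le_mul_right k (by omega)
      have h6 : k * (n - k + 1) = (n - k) * k + k := by ring
      omega
    · have hbd : (j - k) * k + (k - i) + 1 ≤ k * (n - k + 1) := by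
        have h5 : (j - k) * k ≤ (n - k) * k := Nat.mul_le_mul_right k (by omega)
        have h6 : k * (n - k + 1) = (n - k) * k + k := by ring
        omega
      rw [beta_ik n k _ hk1 (by omega) hbd]
      have hl1 : (j - k) * k + (k - i) + 1 - 1 = (j - k) * k + (k - i) := by omega
      have hdiv : ((j - k) * k + (k - i)) / k = j - k := by
        rw [Nat.mul_comm, Nat.mul_add_div (by omega), Nat.div_eq_of_lt (by omega), Nat.add_zero]
      have hmod : ((j - k) * k + (k - i)) % k = k - i := by
        rw [Nat.mul_comm, Nat.mul_add_mod]
        exact Nat.mod_eq_of_lt (by omega)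
      rw [hl1, hdiv, hmod, Prod.mk.injEq]
      omega
end

section
/- For every integer n ≥ 1 and every 1 ≤ k ≤ n, the positive roots of the enumeration associated to the reduced word i^k beyond position k(n−k+1) are exactly the roots not containing α_k: {β_{k(n−k+1)+1}^{i^k}, …, β_N^{i^k}} = {(i,j) ∈ Δ₊ : ¬(i ≤ k ≤ j)}, where N = n(n+1)/2. -/
/-! ### Auxiliary definitions -/

/-- The descending run `(a, a−1, …, a−r+1)`. -/
def descW (a r : ℕ) : List ℕ := (List.range r).map (fun t => a - t)

/-- The ascending run `(1, 2, …, r)`. -/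
def ascW (r : ℕ) : List ℕ := (List.range r).map (fun t => t + 1)

/-- The concatenation of the first `b` rows of part (B). -/
def Bflat (n k b : ℕ) : List ℕ := ((List.range b).map (fun b' => descW n (k - 1 - b'))).flatten

/-- The concatenation of the first `b` rows of part (C). -/
def Cflat (n k b : ℕ) : List ℕ := ((List.range b).map (fun b' => ascW (n - k - b'))).flatten

lemma wordA_flat (n k : ℕ) :
    wordA n k = ((List.range (n - k + 1)).map (fun m => descW (k + m) k)).flatten := rfl

lemma wordB_flat (n k : ℕ) : wordB n k = Bflat n k (k - 1) := rfl

lemma wordC_flat (n k : ℕ) : wordC n k = Cflat n k (n - k) := rfl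

/-! ### Basic word product lemmas -/

lemma sw_eval (i x : ℕ) : sw i x = if x = i then i + 1 else if x = i + 1 then i else x := by
  rw [sw, Equiv.swap_apply_def]

lemma wordProd_nil (x : ℕ) : wordProd [] x = x := rfl

lemma wordProd_append_s13 (u v : List ℕ) (x : ℕ) :
    wordProd (u ++ v) x = wordProd u (wordProd v x) := by
  simp only [wordProd, List.map_append, List.prod_append, Equiv.Perm.mul_apply]

lemma wordProd_singleton (s x : ℕ) : wordProd [s] x = sw s x := by
  simp [wordProd]

lemma flat_succ (f : ℕ → List ℕ) (b : ℕ) :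
    ((List.range (b + 1)).map f).flatten = ((List.range b).map f).flatten ++ f b := by
  rw [List.range_succ, List.map_append, List.flatten_append]
  simp

/-! ### Evaluation of the runs -/

lemma descW_eval (a r : ℕ) (h : r ≤ a) : ∀ x,
    wordProd (descW a r) x =
      if x = a + 1 - r then a + 1 else if a + 1 - r < x ∧ x ≤ a + 1 then x - 1 else x := by
  induction r with
  | zero =>
    intro x
    simp only [descW, List.range_zero, List.map_nil, wordProd_nil]
    split_ifs <;> omega
  | succ r ih =>
    intro x
    have hrow : descW a (r + 1) = descW a r ++ [a - r] := by
      rw [descW, descW, List.range_succ, List.map_append]; rfl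
    rw [hrow, wordProd_append_s13, wordProd_singleton, sw_eval, ih (by omega)]
    split_ifs <;> omega

lemma ascW_eval (r : ℕ) : ∀ x,
    wordProd (ascW r) x = if x = r + 1 then 1 else if 1 ≤ x ∧ x ≤ r then x + 1 else x := by
  induction r with
  | zero =>
    intro x
    simp only [ascW, List.range_zero, List.map_nil, wordProd_nil]
    split_ifs <;> omega
  | succ r ih =>
    intro x
    have hrow : ascW (r + 1) = ascW r ++ [r + 1] := by
      rw [ascW, ascW, List.range_succ, List.map_append]; rfl
    rw [hrow, wordProd_append_s13, wordProd_singleton, sw_eval, ih]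
    split_ifs <;> omega

/-! ### Evaluation of the block products -/

lemma Aeval (n k : ℕ) (hk : 1 ≤ k) : ∀ m, m + k ≤ n + 1 → ∀ x,
    wordProd (((List.range m).map (fun m' => descW (k + m') k)).flatten) x =
      if 1 ≤ x ∧ x ≤ m then x + k else if x ≤ m + k then x - m else x := by
  intro m
  induction m with
  | zero =>
    intro _ x
    simp only [List.range_zero, List.map_nil, List.flatten_nil, wordProd_nil]
    split_ifs <;> omega
  | succ m ih =>
    intro hm x
    rw [flat_succ, wordProd_append_s13, descW_eval (k + m) k (by omega), ih (by omega)]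
    split_ifs <;> omega

lemma wordA_eval (n k : ℕ) (hk : 1 ≤ k) (hkn : k ≤ n) : ∀ x,
    wordProd (wordA n k) x =
      if 1 ≤ x ∧ x ≤ n - k + 1 then x + k else if x ≤ n + 1 then x - (n - k + 1) else x := by
  intro x
  rw [wordA_flat, Aeval n k hk (n - k + 1) (by omega)]
  split_ifs <;> omega

lemma Beval (n k : ℕ) (hk : 1 ≤ k) (hkn : k ≤ n) : ∀ b, b ≤ k - 1 → ∀ x,
    wordProd (Bflat n k b) x =
      if x ≤ n + 1 - k then x
      else if x ≤ n + 1 - k + b then 2 * n + 3 - k - x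
      else if x ≤ n + 1 then x - b else x := by
  intro b
  induction b with
  | zero =>
    intro _ x
    simp only [Bflat, List.range_zero, List.map_nil, List.flatten_nil, wordProd_nil]
    split_ifs <;> omega
  | succ b ih =>
    intro hb x
    rw [Bflat, flat_succ, wordProd_append_s13, descW_eval n (k - 1 - b) (by omega)]
    rw [show ((List.range b).map (fun b' => descW n (k - 1 - b'))).flatten = Bflat n k b from rfl]
    rw [ih (by omega)]
    split_ifs <;> omega

lemma Ceval (n k : ℕ) (hk : 1 ≤ k) (hkn : k ≤ n) : ∀ b, b ≤ n - k → ∀ x,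
    wordProd (Cflat n k b) x =
      if 1 ≤ x ∧ x ≤ n - k + 1 - b then x + b
      else if 1 ≤ x ∧ x ≤ n - k + 1 then n - k + 2 - x else x := by
  intro b
  induction b with
  | zero =>
    intro _ x
    simp only [Cflat, List.range_zero, List.map_nil, List.flatten_nil, wordProd_nil]
    split_ifs <;> omega
  | succ b ih =>
    intro hb x
    rw [Cflat, flat_succ, wordProd_append_s13, ascW_eval (n - k - b)]
    rw [show ((List.range b).map (fun b' => ascW (n - k - b'))).flatten = Cflat n k b from rfl]
    rw [ih (by omega)]
    split_ifs <;> omega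

/-! ### Beta values -/

lemma betaB1 (n k b t : ℕ) (hkn : k ≤ n) (h : t + b + 2 ≤ k) :
    wordProd (wordA n k ++ (Bflat n k b ++ descW n t)) (n - t) = k - 1 - b - t := by
  rw [wordProd_append_s13, wordProd_append_s13]
  have e1 : wordProd (descW n t) (n - t) = n - t := by
    rw [descW_eval n t (by omega)]; split_ifs <;> omega
  rw [e1]
  have e2 : wordProd (Bflat n k b) (n - t) = n - t - b := by
    rw [Beval n k (by omega) hkn b (by omega)]; split_ifs <;> omega
  rw [e2]
  rw [wordA_eval n k (by omega) hkn]
  split_ifs <;> omega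

lemma betaB2 (n k b t : ℕ) (hkn : k ≤ n) (h : t + b + 2 ≤ k) :
    wordProd (wordA n k ++ (Bflat n k b ++ descW n t)) (n - t + 1) = k - b := by
  rw [wordProd_append_s13, wordProd_append_s13]
  have e1 : wordProd (descW n t) (n - t + 1) = n + 1 := by
    rw [descW_eval n t (by omega)]; split_ifs <;> omega
  rw [e1]
  have e2 : wordProd (Bflat n k b) (n + 1) = n + 1 - b := by
    rw [Beval n k (by omega) hkn b (by omega)]; split_ifs <;> omega
  rw [e2]
  rw [wordA_eval n k (by omega) hkn]
  split_ifs <;> omega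

lemma betaC1 (n k b t : ℕ) (hk : 1 ≤ k) (h : t + b + k + 1 ≤ n) :
    wordProd (wordA n k ++ (wordB n k ++ (Cflat n k b ++ ascW t))) (t + 1) = k + b + 1 := by
  rw [wordProd_append_s13, wordProd_append_s13, wordProd_append_s13]
  have e1 : wordProd (ascW t) (t + 1) = 1 := by
    rw [ascW_eval t]; split_ifs <;> omega
  rw [e1]
  have e2 : wordProd (Cflat n k b) 1 = 1 + b := by
    rw [Ceval n k hk (by omega) b (by omega)]; split_ifs <;> omega
  rw [e2]
  have e3 : wordProd (wordB n k) (1 + b) = 1 + b := by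
    rw [wordB_flat, Beval n k hk (by omega) (k - 1) (by omega)]; split_ifs <;> omega
  rw [e3]
  rw [wordA_eval n k hk (by omega)]
  split_ifs <;> omega

lemma betaC2 (n k b t : ℕ) (hk : 1 ≤ k) (h : t + b + k + 1 ≤ n) :
    wordProd (wordA n k ++ (wordB n k ++ (Cflat n k b ++ ascW t))) (t + 1 + 1) = k + b + t + 2 := by
  rw [wordProd_append_s13, wordProd_append_s13, wordProd_append_s13]
  have e1 : wordProd (ascW t) (t + 1 + 1) = t + 2 := by
    rw [ascW_eval t]; split_ifs <;> omega
  rw [e1]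
  have e2 : wordProd (Cflat n k b) (t + 2) = t + 2 + b := by
    rw [Ceval n k hk (by omega) b (by omega)]; split_ifs <;> omega
  rw [e2]
  have e3 : wordProd (wordB n k) (t + 2 + b) = t + 2 + b := by
    rw [wordB_flat, Beval n k hk (by omega) (k - 1) (by omega)]; split_ifs <;> omega
  rw [e3]
  rw [wordA_eval n k hk (by omega)]
  split_ifs <;> omega

/-! ### Take / getD helpers -/

lemma take_app (l1 l2 : List ℕ) (e : ℕ) : (l1 ++ l2).take (l1.length + e) = l1 ++ l2.take e := by
  rw [List.take_append]; simp

lemma getD_app (l1 l2 : List ℕ) (e : ℕ) : (l1 ++ l2).getD (l1.length + e) 0 = l2.getD e 0 := by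
  rw [List.getD_append_right _ _ _ _ (by omega)]; simp

lemma getD_range_map (f : ℕ → List ℕ) (R b : ℕ) (hb : b < R) :
    ((List.range R).map f).getD b [] = f b := by
  simp [List.getD_eq_getElem?_getD, List.getElem?_map, List.getElem?_range hb]

lemma take_range_map (f : ℕ → List ℕ) (R b : ℕ) (hb : b ≤ R) :
    ((List.range R).map f).take b = (List.range b).map f := by
  rw [← List.map_take, List.take_range, inf_eq_left.mpr hb]

lemma descW_take (a r t : ℕ) (h : t ≤ r) : (descW a r).take t = descW a t := by
  rw [descW, descW, ← List.map_take, List.take_range, inf_eq_left.mpr h]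

lemma ascW_take (r t : ℕ) (h : t ≤ r) : (ascW r).take t = ascW t := by
  rw [ascW, ascW, ← List.map_take, List.take_range, inf_eq_left.mpr h]

lemma descW_getD (a r t : ℕ) (h : t < r) : (descW a r).getD t 0 = a - t := by
  simp [descW, List.getD_eq_getElem?_getD, List.getElem?_map, List.getElem?_range h]

lemma ascW_getD (r t : ℕ) (h : t < r) : (ascW r).getD t 0 = t + 1 := by
  simp [ascW, List.getD_eq_getElem?_getD, List.getElem?_map, List.getElem?_range h]

/-! ### Flatten decomposition -/

lemma toBT : ∀ (L : List (List ℕ)) (d : ℕ), d < L.flatten.length →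
    ∃ b t, b < L.length ∧ t < (L.getD b []).length ∧
      L.flatten.take d = (L.take b).flatten ++ (L.getD b []).take t ∧
      L.flatten.getD d 0 = (L.getD b []).getD t 0 := by
  intro L
  induction L with
  | nil => intro d hd; simp at hd
  | cons hd tl ih =>
    intro d hdlt
    by_cases hc : d < hd.length
    · refine ⟨0, d, by simp, by simpa [List.getD_cons_zero] using hc, ?_, ?_⟩
      · simp only [List.flatten_cons, List.take_zero, List.flatten_nil, List.nil_append,
          List.getD_cons_zero]
        exact List.take_append_of_le_length (by omega)
      · simp only [List.flatten_cons, List.getD_cons_zero]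
        exact List.getD_append _ _ _ d hc
    · push_neg at hc
      have hd' : d - hd.length < tl.flatten.length := by
        simp only [List.flatten_cons, List.length_append] at hdlt; omega
      obtain ⟨b, t, hb, ht, h1, h2⟩ := ih (d - hd.length) hd'
      have hdd : d = hd.length + (d - hd.length) := by omega
      refine ⟨b + 1, t, by simpa using hb, by simpa [List.getD_cons_succ] using ht, ?_, ?_⟩
      · rw [List.flatten_cons, hdd, take_app, h1]
        simp [List.getD_cons_succ, List.take_succ_cons, List.flatten_cons, List.append_assoc]
      · rw [List.flatten_cons, hdd, getD_app, h2]
        simp [List.getD_cons_succ]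

lemma toD : ∀ (L : List (List ℕ)) (b t : ℕ), b < L.length → t < (L.getD b []).length →
    ∃ d, d < L.flatten.length ∧
      L.flatten.take d = (L.take b).flatten ++ (L.getD b []).take t ∧
      L.flatten.getD d 0 = (L.getD b []).getD t 0 := by
  intro L
  induction L with
  | nil => intro b t hb _; simp at hb
  | cons hd tl ih =>
    intro b t hb ht
    cases b with
    | zero =>
      simp only [List.getD_cons_zero] at ht
      refine ⟨t, ?_, ?_, ?_⟩
      · simp only [List.flatten_cons, List.length_append]; omega
      · simp only [List.flatten_cons, List.take_zero, List.flatten_nil, List.nil_append,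
          List.getD_cons_zero]
        exact List.take_append_of_le_length (by omega)
      · simp only [List.flatten_cons, List.getD_cons_zero]
        exact List.getD_append _ _ _ t ht
    | succ b =>
      simp only [List.getD_cons_succ] at ht
      simp only [List.length_cons] at hb
      obtain ⟨d, hdlt, h1, h2⟩ := ih b t (by omega) ht
      refine ⟨hd.length + d, ?_, ?_, ?_⟩
      · simp only [List.flatten_cons, List.length_append]; omega
      · rw [List.flatten_cons, take_app, h1]
        simp [List.getD_cons_succ, List.take_succ_cons, List.flatten_cons, List.append_assoc]
      · rw [List.flatten_cons, getD_app, h2]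
        simp [List.getD_cons_succ]

/-! ### Lengths -/

lemma descW_length (a r : ℕ) : (descW a r).length = r := by simp [descW]

lemma ascW_length (r : ℕ) : (ascW r).length = r := by simp [ascW]

lemma sum_const_range (R c : ℕ) : ((List.range R).map (fun _ => c)).sum = R * c := by
  induction R with
  | zero => simp
  | succ R ih =>
    rw [List.range_succ, List.map_append, List.sum_append, ih]
    simp
    ring

lemma sum_desc_range : ∀ r : ℕ, 2 * (((List.range r).map (fun b => r - b)).sum) = r * (r + 1) := by
  intro r
  induction r with
  | zero => simp
  | succ r ih =>
    rw [List.range_succ_eq_map, List.map_cons, List.map_map]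
    have he : ((fun b => r + 1 - b) ∘ Nat.succ) = fun b => r - b := by
      funext b; simp [Function.comp]
    rw [he, List.sum_cons]
    calc 2 * ((r + 1 - 0) + ((List.range r).map (fun b => r - b)).sum)
        = 2 * (r + 1) + 2 * ((List.range r).map (fun b => r - b)).sum := by omega
      _ = 2 * (r + 1) + r * (r + 1) := by rw [ih]
      _ = (r + 1) * (r + 1 + 1) := by ring

lemma lenA (n k : ℕ) : (wordA n k).length = (n - k + 1) * k := by
  rw [wordA_flat]
  rw [List.length_flatten, List.map_map]
  have : (List.length ∘ fun m => descW (k + m) k) = fun _ => k := by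
    funext m; simp [descW_length]
  rw [this, sum_const_range]

lemma lenB (n k : ℕ) : 2 * (wordB n k).length = (k - 1) * k := by
  rw [wordB_flat, Bflat]
  rw [List.length_flatten, List.map_map]
  have : (List.length ∘ fun b' => descW n (k - 1 - b')) = fun b' => (k - 1) - b' := by
    funext b'; simp [descW_length]
  rw [this, sum_desc_range (k - 1)]
  cases k with
  | zero => simp
  | succ k => simp

lemma lenC (n k : ℕ) : 2 * (wordC n k).length = (n - k) * (n - k + 1) := by
  rw [wordC_flat, Cflat]
  rw [List.length_flatten, List.map_map]
  have : (List.length ∘ fun b' => ascW (n - k - b')) = fun b' => (n - k) - b' := by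
    funext b'; simp [ascW_length]
  rw [this, sum_desc_range (n - k)]

lemma lenik (n k : ℕ) (hk : 1 ≤ k) (hkn : k ≤ n) : 2 * (ik n k).length = n * (n + 1) := by
  obtain ⟨m, rfl⟩ : ∃ m, n = k + m := ⟨n - k, by omega⟩
  obtain ⟨k', rfl⟩ : ∃ k', k = k' + 1 := ⟨k - 1, by omega⟩
  have hA := lenA (k' + 1 + m) (k' + 1)
  have hB := lenB (k' + 1 + m) (k' + 1)
  have hC := lenC (k' + 1 + m) (k' + 1)
  have e1 : k' + 1 + m - (k' + 1) = m := by omega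
  have e2 : k' + 1 - 1 = k' := by omega
  rw [e1] at hC
  rw [e2] at hB
  rw [show k' + 1 + m - (k' + 1) + 1 = m + 1 from by omega] at hA
  simp only [ik, List.length_append]
  calc 2 * ((wordA (k' + 1 + m) (k' + 1)).length + (wordB (k' + 1 + m) (k' + 1)).length
        + (wordC (k' + 1 + m) (k' + 1)).length)
      = 2 * (wordA (k' + 1 + m) (k' + 1)).length + 2 * (wordB (k' + 1 + m) (k' + 1)).length
        + 2 * (wordC (k' + 1 + m) (k' + 1)).length := by ring
    _ = 2 * ((m + 1) * (k' + 1)) + k' * (k' + 1) + m * (m + 1) := by rw [hA, hB, hC]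
    _ = (k' + 1 + m) * (k' + 1 + m + 1) := by ring

/-- The positive roots of the enumeration associated to `i^k` beyond position `k(n−k+1)`
(up to `N = n(n+1)/2`) are exactly the positive roots `α_{i,j}` not containing `α_k`,
i.e. with `¬(i ≤ k ≤ j)`. -/
theorem ik_final_roots (n k : ℕ) (hn : 1 ≤ n) (hk1 : 1 ≤ k) (hkn : k ≤ n) :
    {q : ℕ × ℕ | ∃ l, k * (n - k + 1) + 1 ≤ l ∧ l ≤ n * (n + 1) / 2 ∧ q = beta (ik n k) l} =
    {q : ℕ × ℕ | 1 ≤ q.1 ∧ q.1 ≤ q.2 ∧ q.2 ≤ n ∧ ¬(q.1 ≤ k ∧ k ≤ q.2)} := by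
  have hAeq : k * (n - k + 1) = (wordA n k).length := by rw [lenA]; ring
  have hNeq : n * (n + 1) / 2 = (ik n k).length := by
    have := lenik n k hk1 hkn; omega
  have hltot : (ik n k).length
      = (wordA n k).length + (wordB n k).length + (wordC n k).length := by
    simp only [ik, List.length_append]
  have hik : ik n k = wordA n k ++ (wordB n k ++ wordC n k) := by
    rw [ik, List.append_assoc]
  ext ⟨i, j⟩
  simp only [Set.mem_setOf_eq]
  constructor
  · rintro ⟨l, hl1, hl2, hq⟩
    rw [hAeq] at hl1
    rw [hNeq] at hl2
    obtain ⟨d, rfl⟩ : ∃ d, l = d + 1 := ⟨l - 1, by omega⟩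
    have hbeta : beta (ik n k) (d + 1)
        = (wordProd ((ik n k).take d) ((ik n k).getD d 0),
           wordProd ((ik n k).take d) ((ik n k).getD d 0 + 1) - 1) := by
      simp [beta]
    have hdA : (wordA n k).length ≤ d := by omega
    have hdN : d < (ik n k).length := by omega
    set e := d - (wordA n k).length with hedef
    have hde : d = (wordA n k).length + e := by omega
    have htk : (ik n k).take d = wordA n k ++ (wordB n k ++ wordC n k).take e := by
      rw [hik, hde, take_app]
    have hgd : (ik n k).getD d 0 = (wordB n k ++ wordC n k).getD e 0 := by
      rw [hik, hde, getD_app]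
    by_cases hcb : e < (wordB n k).length
    · -- part B
      have h1 : (wordB n k ++ wordC n k).take e = (wordB n k).take e :=
        List.take_append_of_le_length (by omega)
      have h2 : (wordB n k ++ wordC n k).getD e 0 = (wordB n k).getD e 0 :=
        List.getD_append _ _ _ e hcb
      obtain ⟨b, t, hb, ht, h3, h4⟩ :=
        toBT ((List.range (k - 1)).map (fun b' => descW n (k - 1 - b'))) e (by
          rw [show ((List.range (k - 1)).map (fun b' => descW n (k - 1 - b'))).flatten
            = wordB n k from rfl]; exact hcb)
      simp only [List.length_map, List.length_range] at hb
      rw [getD_range_map _ _ _ hb] at ht h3 h4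
      rw [descW_length] at ht
      rw [take_range_map _ _ _ (by omega), descW_take n _ t (by omega)] at h3
      rw [descW_getD n _ t ht] at h4
      have htake : (ik n k).take d = wordA n k ++ (Bflat n k b ++ descW n t) := by
        rw [htk, h1]
        rw [show ((List.range (k - 1)).map (fun b' => descW n (k - 1 - b'))).flatten.take e
          = (wordB n k).take e from rfl] at h3
        rw [h3]; rfl
      have hget : (ik n k).getD d 0 = n - t := by
        rw [hgd, h2]
        rw [show ((List.range (k - 1)).map (fun b' => descW n (k - 1 - b'))).flatten.getD e 0
          = (wordB n k).getD e 0 from rfl] at h4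
        exact h4
      have hbt : t + b + 2 ≤ k := by omega
      have hval : beta (ik n k) (d + 1) = (k - 1 - b - t, k - b - 1) := by
        rw [hbeta, htake, hget, betaB1 n k b t hkn hbt, betaB2 n k b t hkn hbt]
      rw [hval] at hq
      simp only [Prod.mk.injEq] at hq
      obtain ⟨hqi, hqj⟩ := hq
      subst hqi hqj
      omega
    · -- part C
      push_neg at hcb
      set f := e - (wordB n k).length with hfdef
      have hef : e = (wordB n k).length + f := by omega
      have h1 : (wordB n k ++ wordC n k).take e = wordB n k ++ (wordC n k).take f := by
        rw [hef, take_app]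
      have h2 : (wordB n k ++ wordC n k).getD e 0 = (wordC n k).getD f 0 := by
        rw [hef, getD_app]
      have hf : f < (wordC n k).length := by omega
      obtain ⟨b, t, hb, ht, h3, h4⟩ :=
        toBT ((List.range (n - k)).map (fun b' => ascW (n - k - b'))) f (by
          rw [show ((List.range (n - k)).map (fun b' => ascW (n - k - b'))).flatten
            = wordC n k from rfl]; exact hf)
      simp only [List.length_map, List.length_range] at hb
      rw [getD_range_map _ _ _ hb] at ht h3 h4
      rw [ascW_length] at ht
      rw [take_range_map _ _ _ (by omega), ascW_take _ t (by omega)] at h3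
      rw [ascW_getD _ t ht] at h4
      have htake : (ik n k).take d = wordA n k ++ (wordB n k ++ (Cflat n k b ++ ascW t)) := by
        rw [htk, h1]
        rw [show ((List.range (n - k)).map (fun b' => ascW (n - k - b'))).flatten.take f
          = (wordC n k).take f from rfl] at h3
        rw [h3]; rfl
      have hget : (ik n k).getD d 0 = t + 1 := by
        rw [hgd, h2]
        rw [show ((List.range (n - k)).map (fun b' => ascW (n - k - b'))).flatten.getD f 0
          = (wordC n k).getD f 0 from rfl] at h4
        exact h4
      have hbt : t + b + k + 1 ≤ n := by omega
      have hval : beta (ik n k) (d + 1) = (k + b + 1, k + b + t + 2 - 1) := by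
        rw [hbeta, htake, hget, betaC1 n k b t hk1 hbt, betaC2 n k b t hk1 hbt]
      rw [hval] at hq
      simp only [Prod.mk.injEq] at hq
      obtain ⟨hqi, hqj⟩ := hq
      subst hqi hqj
      omega
  · rintro ⟨hi1, hij, hjn, hnk⟩
    by_cases hcase : j < k
    · -- B part: j ≤ k - 1, take b = k-1-j, t = j-i
      have hb : (k - 1 - j) < ((List.range (k - 1)).map (fun b' => descW n (k - 1 - b'))).length := by
        simp only [List.length_map, List.length_range]; omega
      have hb' : (k - 1 - j) < k - 1 := by omega
      have ht : (j - i) < (((List.range (k - 1)).map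
          (fun b' => descW n (k - 1 - b'))).getD (k - 1 - j) []).length := by
        rw [getD_range_map _ _ _ hb', descW_length]; omega
      obtain ⟨dB, hdB, h3, h4⟩ := toD _ (k - 1 - j) (j - i) hb ht
      rw [getD_range_map _ _ _ hb'] at h3 h4
      rw [take_range_map _ _ _ (by omega), descW_take n _ (j - i) (by omega)] at h3
      rw [descW_getD n _ (j - i) (by rw [getD_range_map _ _ _ hb', descW_length] at ht; exact ht)] at h4
      have hdB' : dB < (wordB n k).length := hdB
      refine ⟨(wordA n k).length + dB + 1, by rw [hAeq]; omega, by rw [hNeq]; omega, ?_⟩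
      have hl1 : (wordA n k).length + dB + 1 - 1 = (wordA n k).length + dB := by omega
      have htake : (ik n k).take ((wordA n k).length + dB)
          = wordA n k ++ (Bflat n k (k - 1 - j) ++ descW n (j - i)) := by
        rw [hik, take_app]
        have h1 : (wordB n k ++ wordC n k).take dB = (wordB n k).take dB :=
          List.take_append_of_le_length (by omega)
        rw [h1]
        rw [show ((List.range (k - 1)).map (fun b' => descW n (k - 1 - b'))).flatten.take dB
          = (wordB n k).take dB from rfl] at h3
        rw [h3]; rfl
      have hget : (ik n k).getD ((wordA n k).length + dB) 0 = n - (j - i) := by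
        rw [hik, getD_app]
        have h2 : (wordB n k ++ wordC n k).getD dB 0 = (wordB n k).getD dB 0 :=
          List.getD_append _ _ _ dB hdB'
        rw [h2]
        rw [show ((List.range (k - 1)).map (fun b' => descW n (k - 1 - b'))).flatten.getD dB 0
          = (wordB n k).getD dB 0 from rfl] at h4
        exact h4
      have hbt : (j - i) + (k - 1 - j) + 2 ≤ k := by omega
      have hval : beta (ik n k) ((wordA n k).length + dB + 1)
          = (k - 1 - (k - 1 - j) - (j - i), k - (k - 1 - j) - 1) := by
        simp only [beta, hl1]
        rw [htake, hget, betaB1 n k _ _ hkn hbt, betaB2 n k _ _ hkn hbt]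
      rw [hval]
      simp only [Prod.mk.injEq]
      omega
    · -- C part: i ≥ k + 1, take b = i-k-1, t = j-i
      push_neg at hcase
      have hik1 : k + 1 ≤ i := by omega
      have hb : (i - k - 1) < ((List.range (n - k)).map (fun b' => ascW (n - k - b'))).length := by
        simp only [List.length_map, List.length_range]; omega
      have hb' : (i - k - 1) < n - k := by omega
      have ht : (j - i) < (((List.range (n - k)).map
          (fun b' => ascW (n - k - b'))).getD (i - k - 1) []).length := by
        rw [getD_range_map _ _ _ hb', ascW_length]; omega
      obtain ⟨dC, hdC, h3, h4⟩ := toD _ (i - k - 1) (j - i) hb ht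
      rw [getD_range_map _ _ _ hb'] at h3 h4
      rw [take_range_map _ _ _ (by omega), ascW_take _ (j - i) (by omega)] at h3
      rw [ascW_getD _ (j - i) (by rw [getD_range_map _ _ _ hb', ascW_length] at ht; exact ht)] at h4
      have hdC' : dC < (wordC n k).length := hdC
      refine ⟨(wordA n k).length + ((wordB n k).length + dC) + 1,
        by rw [hAeq]; omega, by rw [hNeq]; omega, ?_⟩
      have hl1 : (wordA n k).length + ((wordB n k).length + dC) + 1 - 1
          = (wordA n k).length + ((wordB n k).length + dC) := by omega
      have htake : (ik n k).take ((wordA n k).length + ((wordB n k).length + dC))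
          = wordA n k ++ (wordB n k ++ (Cflat n k (i - k - 1) ++ ascW (j - i))) := by
        rw [hik, take_app, take_app]
        rw [show ((List.range (n - k)).map (fun b' => ascW (n - k - b'))).flatten.take dC
          = (wordC n k).take dC from rfl] at h3
        rw [h3]; rfl
      have hget : (ik n k).getD ((wordA n k).length + ((wordB n k).length + dC)) 0
          = (j - i) + 1 := by
        rw [hik, getD_app, getD_app]
        rw [show ((List.range (n - k)).map (fun b' => ascW (n - k - b'))).flatten.getD dC 0
          = (wordC n k).getD dC 0 from rfl] at h4
        exact h4
      have hbt : (j - i) + (i - k - 1) + k + 1 ≤ n := by omega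
      have hval : beta (ik n k) ((wordA n k).length + ((wordB n k).length + dC) + 1)
          = (k + (i - k - 1) + 1, k + (i - k - 1) + (j - i) + 2 - 1) := by
        simp only [beta, hl1]
        rw [htake, hget, betaC1 n k _ _ hk1 hbt, betaC2 n k _ _ hk1 hbt]
      rw [hval]
      simp only [Prod.mk.injEq]
      omega
end
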